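/- arXiv:2107.12570 — 5 statements merged into one kernel-verified Lean document; each statement's English description precedes it below -/
import Mathlib

section
/- Let p > 2. There exists a constant C_p > 0 such that for all a, b ≥ 0, (a+b)^p ≥ a^p + b^p + p·a^(p-1)·b + p·a·b^(p-1) − C_p·a^(p/2)·b^(p/2). -/
/-! By symmetry take `b ≤ a`. Bernoulli's inequality gives `(a + b) ^ p ≥ a ^ p + p a ^ (p - 1) b`,
and moving weight from the smaller base `b` to `a` shows that each of `b ^ p` and `a b ^ (p - 1)` is
at most `a ^ (p / 2) b ^ (p / 2)` once `p ≥ 2`; hence `C = p + 1` works. -/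

open Real

theorem rpow_add_mul_rpow_sub_one_mul_le_add_rpow {p a b : ℝ} (hp : 1 ≤ p) (ha : 0 ≤ a)
    (hb : 0 ≤ b) : a ^ p + p * a ^ (p - 1) * b ≤ (a + b) ^ p := by
  obtain rfl | ha := ha.eq_or_lt
  · obtain rfl | hp := hp.eq_or_lt
    · simp
    simp [zero_rpow (by linarith : p ≠ 0), zero_rpow (by linarith : p - 1 ≠ 0),
      rpow_nonneg hb]
  have hB : 1 + p * (b / a) ≤ (1 + b / a) ^ p :=
    one_add_mul_self_le_rpow_one_add (by linarith [div_nonneg hb ha.le]) hp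
  calc a ^ p + p * a ^ (p - 1) * b = (1 + p * (b / a)) * a ^ p := by
        rw [rpow_sub_one ha.ne']; field_simp
    _ ≤ (1 + b / a) ^ p * a ^ p := by gcongr
    _ = (a + b) ^ p := by
        rw [← mul_rpow (by positivity) ha.le]; congr 1; field_simp

theorem rpow_mul_rpow_add_le_rpow_add_mul_rpow {a b s t d : ℝ} (hb : 0 ≤ b) (hba : b ≤ a)
    (hd : 0 ≤ d) (hsd : s + d ≠ 0) (htd : t + d ≠ 0) :
    a ^ s * b ^ (t + d) ≤ a ^ (s + d) * b ^ t := by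
  have ha : 0 ≤ a := hb.trans hba
  calc a ^ s * b ^ (t + d) = a ^ s * b ^ t * b ^ d := by rw [rpow_add' hb htd, mul_assoc]
    _ ≤ a ^ s * b ^ t * a ^ d := by gcongr
    _ = a ^ (s + d) * b ^ t := by rw [rpow_add' ha hsd]; ring

theorem add_rpow_lower_bound_of_le {p a b : ℝ} (hp : 2 ≤ p) (hb : 0 ≤ b) (hba : b ≤ a) :
    a ^ p + b ^ p + p * a ^ (p - 1) * b + p * a * b ^ (p - 1)
      - (p + 1) * a ^ (p / 2) * b ^ (p / 2) ≤ (a + b) ^ p := by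
  have tangent := rpow_add_mul_rpow_sub_one_mul_le_add_rpow (p := p) (by linarith) (hb.trans hba) hb
  have hbp : b ^ p ≤ a ^ (p / 2) * b ^ (p / 2) := by
    simpa using rpow_mul_rpow_add_le_rpow_add_mul_rpow (s := 0) (t := p / 2) (d := p / 2)
      hb hba (by linarith) (by simp; linarith) (by simp; linarith)
  have habp : a * b ^ (p - 1) ≤ a ^ (p / 2) * b ^ (p / 2) := by
    convert rpow_mul_rpow_add_le_rpow_add_mul_rpow (s := 1) (t := p / 2) (d := p / 2 - 1)
      hb hba (by linarith) (by ring_nf; linarith) (by ring_nf; linarith) using 3 <;> ring_nf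
    simp
  linarith [mul_le_mul_of_nonneg_left habp (by linarith : (0 : ℝ) ≤ p)]

theorem power_sum_interaction_estimate (p : ℝ) (hp : 2 < p) :
    ∃ C : ℝ, 0 < C ∧ ∀ a b : ℝ, 0 ≤ a → 0 ≤ b →
      a ^ p + b ^ p + p * a ^ (p - 1) * b + p * a * b ^ (p - 1)
        - C * a ^ (p / 2) * b ^ (p / 2) ≤ (a + b) ^ p := by
  refine ⟨p + 1, by linarith, fun a b ha hb => ?_⟩
  rcases le_total b a with hba | hab
  · exact add_rpow_lower_bound_of_le hp.le hb hba
  · have := add_rpow_lower_bound_of_le hp.le ha hab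
    rw [add_comm b a] at this
    linarith
end

section
/- Let γ₁ > 1 and γ₂ > 1, and let 0 < η < min{γ₁, γ₂} − 1. Then there exists a constant C > 0 (depending on γ₁, γ₂, η) such that for all x, y ≥ 0: (1+x)^γ₁ (1+y)^γ₂ ≥ 1 + x^γ₁ y^γ₂ + γ₁ x + γ₂ y − C (x^(γ₁−1−η) y^γ₂ + x^γ₁ y^(γ₂−1−η)). -/
/-!
Off the quadrant `x, y > 1` no correction is needed: if `y ≤ 1`, then Bernoulli's inequality
and superadditivity of `t ↦ t ^ a` give the bound, because `y ^ b ≤ y ≤ b * y`; the case `x ≤ 1`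
is symmetric. For `x, y > 1` the product `(1 + x) ^ a * (1 + y) ^ b` still dominates
`1 + x ^ a * y ^ b`, and the linear terms are absorbed by the interaction terms, since
`y ≤ x ^ p * y ^ b` and `x ≤ x ^ a * y ^ q` whenever the exponents `p, q` are nonnegative.
-/

open Real

lemma one_add_rpow_le_rpow_one_add {a x : ℝ} (ha : 1 ≤ a) (hx : 0 ≤ x) :
    1 + x ^ a ≤ (1 + x) ^ a := by
  simpa only [one_rpow] using add_rpow_le_rpow_add zero_le_one hx ha

lemma one_add_mul_rpow_le_mul_rpow_one_add {a b x y : ℝ} (ha : 1 ≤ a) (hb : 1 ≤ b)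
    (hx : 0 ≤ x) (hy : 0 ≤ y) : 1 + x ^ a * y ^ b ≤ (1 + x) ^ a * (1 + y) ^ b := by
  have hxa := one_add_rpow_le_rpow_one_add ha hx
  have hyb := one_add_rpow_le_rpow_one_add hb hy
  have hxa₀ : 0 ≤ x ^ a := rpow_nonneg hx a
  have hyb₀ : 0 ≤ y ^ b := rpow_nonneg hy b
  calc 1 + x ^ a * y ^ b ≤ (1 + x ^ a) * (1 + y ^ b) := by nlinarith
    _ ≤ (1 + x) ^ a * (1 + y) ^ b := by gcongr

lemma one_add_mul_rpow_add_le_mul_rpow_one_add_of_le_one {a b x y : ℝ} (ha : 1 ≤ a)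
    (hb : 1 ≤ b) (hx : 0 ≤ x) (hy : 0 ≤ y) (hy₁ : y ≤ 1) :
    1 + x ^ a * y ^ b + a * x + b * y ≤ (1 + x) ^ a * (1 + y) ^ b := by
  have hxa := one_add_rpow_le_rpow_one_add ha hx
  have bernoulli_x : 1 + a * x ≤ (1 + x) ^ a := one_add_mul_self_le_rpow_one_add (by linarith) ha
  have bernoulli_y : 1 + b * y ≤ (1 + y) ^ b := one_add_mul_self_le_rpow_one_add (by linarith) hb
  have hyb : y ^ b ≤ b * y := by nlinarith [rpow_le_self_of_le_one hy hy₁ hb]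
  have hxa₀ : 0 ≤ x ^ a := rpow_nonneg hx a
  calc 1 + x ^ a * y ^ b + a * x + b * y
      ≤ (1 + a * x) + b * y * (1 + x ^ a) := by linarith [mul_le_mul_of_nonneg_left hyb hxa₀]
    _ ≤ (1 + x) ^ a + b * y * (1 + x) ^ a := by gcongr
    _ = (1 + x) ^ a * (1 + b * y) := by ring
    _ ≤ (1 + x) ^ a * (1 + y) ^ b := by gcongr

lemma le_rpow_mul_rpow_of_one_le {x y p q : ℝ} (hx : 1 ≤ x) (hy : 1 ≤ y) (hp : 0 ≤ p)
    (hq : 1 ≤ q) : y ≤ x ^ p * y ^ q :=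
  calc y ≤ y ^ q := self_le_rpow_of_one_le hy hq
    _ = 1 * y ^ q := (one_mul _).symm
    _ ≤ x ^ p * y ^ q := by gcongr; exact one_le_rpow hx hp

lemma one_add_mul_rpow_add_le_mul_rpow_one_add_add {a b p q x y : ℝ} (ha : 1 ≤ a)
    (hb : 1 ≤ b) (hp : 0 ≤ p) (hq : 0 ≤ q) (hx : 0 ≤ x) (hy : 0 ≤ y) :
    1 + x ^ a * y ^ b + a * x + b * y
      ≤ (1 + x) ^ a * (1 + y) ^ b + (a + b) * (x ^ p * y ^ b + x ^ a * y ^ q) := by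
  have hxp : 0 ≤ x ^ p * y ^ b := mul_nonneg (rpow_nonneg hx p) (rpow_nonneg hy b)
  have hyq : 0 ≤ x ^ a * y ^ q := mul_nonneg (rpow_nonneg hx a) (rpow_nonneg hy q)
  have hcorr : 0 ≤ (a + b) * (x ^ p * y ^ b + x ^ a * y ^ q) :=
    mul_nonneg (by linarith) (add_nonneg hxp hyq)
  rcases le_or_gt y 1 with hy₁ | hy₁
  · linarith [one_add_mul_rpow_add_le_mul_rpow_one_add_of_le_one ha hb hx hy hy₁]
  rcases le_or_gt x 1 with hx₁ | hx₁
  · have := one_add_mul_rpow_add_le_mul_rpow_one_add_of_le_one hb ha hy hx hx₁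
    linarith [mul_comm (x ^ a) (y ^ b), mul_comm ((1 + x) ^ a) ((1 + y) ^ b)]
  have hy_le := le_rpow_mul_rpow_of_one_le hx₁.le hy₁.le hp hb
  have hx_le := mul_comm (y ^ q) (x ^ a) ▸ le_rpow_mul_rpow_of_one_le hy₁.le hx₁.le hq ha
  have ha₀ : 0 ≤ a := by linarith
  have hb₀ : 0 ≤ b := by linarith
  linarith [one_add_mul_rpow_le_mul_rpow_one_add ha hb hx hy, mul_le_mul_of_nonneg_left hx_le ha₀,
    mul_le_mul_of_nonneg_left hy_le hb₀, mul_nonneg ha₀ hxp, mul_nonneg hb₀ hyq]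

theorem two_variable_interaction_inequality_general (γ₁ γ₂ η : ℝ)
    (h₁ : 1 < γ₁) (h₂ : 1 < γ₂) (hη' : η < min γ₁ γ₂ - 1) :
    ∃ C : ℝ, 0 < C ∧ ∀ x y : ℝ, 0 ≤ x → 0 ≤ y →
      1 + x ^ γ₁ * y ^ γ₂ + γ₁ * x + γ₂ * y
        - C * (x ^ (γ₁ - 1 - η) * y ^ γ₂ + x ^ γ₁ * y ^ (γ₂ - 1 - η))
        ≤ (1 + x) ^ γ₁ * (1 + y) ^ γ₂ := by
  obtain ⟨hη₁, hη₂⟩ := lt_min_iff.mp (lt_sub_iff_add_lt.mp hη')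
  refine ⟨γ₁ + γ₂, by linarith, fun x y hx hy => ?_⟩
  have := one_add_mul_rpow_add_le_mul_rpow_one_add_add h₁.le h₂.le
    (by linarith : 0 ≤ γ₁ - 1 - η) (by linarith : 0 ≤ γ₂ - 1 - η) hx hy
  linarith

theorem two_variable_interaction_inequality (γ₁ γ₂ η : ℝ)
    (h₁ : 1 < γ₁) (h₂ : 1 < γ₂) (hη : 0 < η) (hη' : η < min γ₁ γ₂ - 1) :
    ∃ C : ℝ, 0 < C ∧ ∀ x y : ℝ, 0 ≤ x → 0 ≤ y →
      1 + x ^ γ₁ * y ^ γ₂ + γ₁ * x + γ₂ * y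
        - C * (x ^ (γ₁ - 1 - η) * y ^ γ₂ + x ^ γ₁ * y ^ (γ₂ - 1 - η))
        ≤ (1 + x) ^ γ₁ * (1 + y) ^ γ₂ :=
  two_variable_interaction_inequality_general γ₁ γ₂ η h₁ h₂ hη'
end

section
/- Let γ₁ > 1, γ₂ > 1 and 0 < η < min{γ₁, γ₂} − 1. There exists C > 0 such that for all a₁, a₂, b₁, b₂ ≥ 0: (a₁+b₁)^γ₁ (a₂+b₂)^γ₂ ≥ a₁^γ₁ a₂^γ₂ + γ₁ a₁^(γ₁−1) a₂^γ₂ b₁ + γ₂ a₁^γ₁ a₂^(γ₂−1) b₂ + b₁^γ₁ b₂^γ₂ − C ( a₁^(1+η) b₁^(γ₁−1−η) b₂^γ₂ + a₂^(1+η) b₂^(γ₂−1−η) b₁^γ₁ ). -/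
/-!
If `b₁ ≤ a₁`, the product of the two Bernoulli inequalities `a ^ γ + γ a ^ (γ - 1) b ≤ (a + b) ^ γ`
gives the first three terms, and `b₁ ^ γ₁ b₂ ^ γ₂` is absorbed by the first error term because
`b₁ ^ (1 + η) ≤ a₁ ^ (1 + η)`; the case `b₂ ≤ a₂` is symmetric. If `a₁ ≤ b₁` and `a₂ ≤ b₂`,
superadditivity of `t ↦ t ^ γ` handles `a₁ ^ γ₁ a₂ ^ γ₂ + b₁ ^ γ₁ b₂ ^ γ₂`, and each first-order
term is dominated by an error term after enlarging surplus powers of `aᵢ` to `bᵢ`.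
So `C = γ₁ + γ₂` works.
-/

open Real

namespace Real

theorem rpow_add_mul_rpow_sub_one_mul_le_add_rpow {a b γ : ℝ} (ha : 0 ≤ a) (hb : 0 ≤ b)
    (hγ : 1 ≤ γ) : a ^ γ + γ * a ^ (γ - 1) * b ≤ (a + b) ^ γ := by
  rcases ha.eq_or_lt with rfl | ha
  · rcases hγ.eq_or_lt with rfl | hγ
    · simp
    · simpa [zero_rpow (by linarith : γ ≠ 0), zero_rpow (by linarith : γ - 1 ≠ 0)] using
        rpow_nonneg hb γ
  have hscale : (a + b) ^ γ = a ^ γ * (1 + b / a) ^ γ := by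
    rw [← mul_rpow ha.le (by positivity), mul_add, mul_div_cancel₀ _ ha.ne', mul_one]
  have hpow : a ^ γ = a ^ (γ - 1) * a := by
    rw [← rpow_add_one ha.ne', sub_add_cancel]
  calc a ^ γ + γ * a ^ (γ - 1) * b = a ^ γ * (1 + γ * (b / a)) := by
        rw [hpow]; field_simp
    _ ≤ a ^ γ * (1 + b / a) ^ γ := by
        gcongr
        exact one_add_mul_self_le_rpow_one_add (by linarith [div_nonneg hb ha.le]) hγ
    _ = (a + b) ^ γ := hscale.symm

theorem rpow_add_le_mul_rpow {x y p q : ℝ} (hx : 0 ≤ x) (hxy : x ≤ y) (hp : 0 ≤ p)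
    (hpq : p + q ≠ 0) : x ^ (p + q) ≤ y ^ p * x ^ q := by
  rw [rpow_add' hx hpq]
  gcongr

theorem rpow_sub_one_mul_le_rpow {x y γ : ℝ} (hx : 0 ≤ x) (hxy : x ≤ y) (hγ : 1 ≤ γ) :
    x ^ (γ - 1) * y ≤ y ^ γ := by
  calc x ^ (γ - 1) * y ≤ y ^ (γ - 1) * y := by gcongr; linarith
    _ = y ^ γ := by rw [← rpow_add_one' (hx.trans hxy) (by linarith), sub_add_cancel]

end Real

noncomputable def productExpansion (γ₁ γ₂ a₁ a₂ b₁ b₂ : ℝ) : ℝ :=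
  a₁ ^ γ₁ * a₂ ^ γ₂ + γ₁ * a₁ ^ (γ₁ - 1) * a₂ ^ γ₂ * b₁
    + γ₂ * a₁ ^ γ₁ * a₂ ^ (γ₂ - 1) * b₂ + b₁ ^ γ₁ * b₂ ^ γ₂

noncomputable def interactionTerm (γ₁ γ₂ η a₁ b₁ b₂ : ℝ) : ℝ :=
  a₁ ^ (1 + η) * b₁ ^ (γ₁ - 1 - η) * b₂ ^ γ₂

section

variable {γ₁ γ₂ η a₁ a₂ b₁ b₂ : ℝ}

theorem productExpansion_comm :
    productExpansion γ₂ γ₁ a₂ a₁ b₂ b₁ = productExpansion γ₁ γ₂ a₁ a₂ b₁ b₂ := by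
  unfold productExpansion; ring

theorem interactionTerm_nonneg (ha₁ : 0 ≤ a₁) (hb₁ : 0 ≤ b₁) (hb₂ : 0 ≤ b₂) :
    0 ≤ interactionTerm γ₁ γ₂ η a₁ b₁ b₂ := by
  unfold interactionTerm; positivity

theorem productExpansion_le_of_le_left (ha₂ : 0 ≤ a₂) (hb₁ : 0 ≤ b₁) (hb₂ : 0 ≤ b₂)
    (hba : b₁ ≤ a₁) (h₁ : 1 ≤ γ₁) (h₂ : 1 ≤ γ₂) (hη : -1 ≤ η) :
    productExpansion γ₁ γ₂ a₁ a₂ b₁ b₂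
      ≤ (a₁ + b₁) ^ γ₁ * (a₂ + b₂) ^ γ₂ + interactionTerm γ₁ γ₂ η a₁ b₁ b₂ := by
  have ha₁ : 0 ≤ a₁ := hb₁.trans hba
  have hbernoulli := mul_le_mul (rpow_add_mul_rpow_sub_one_mul_le_add_rpow ha₁ hb₁ h₁)
    (rpow_add_mul_rpow_sub_one_mul_le_add_rpow ha₂ hb₂ h₂) (by positivity) (by positivity)
  have hcross : 0 ≤ γ₁ * a₁ ^ (γ₁ - 1) * b₁ * (γ₂ * a₂ ^ (γ₂ - 1) * b₂) := by
    have : 0 ≤ γ₁ := by linarith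
    have : 0 ≤ γ₂ := by linarith
    positivity
  have hpure : b₁ ^ γ₁ * b₂ ^ γ₂ ≤ interactionTerm γ₁ γ₂ η a₁ b₁ b₂ := by
    have := rpow_add_le_mul_rpow hb₁ hba (by linarith : 0 ≤ 1 + η) (q := γ₁ - 1 - η)
      (by ring_nf; linarith)
    rw [show 1 + η + (γ₁ - 1 - η) = γ₁ by ring] at this
    unfold interactionTerm
    gcongr
  unfold productExpansion
  linarith

theorem productExpansion_le_of_le_right (ha₁ : 0 ≤ a₁) (hb₁ : 0 ≤ b₁) (hb₂ : 0 ≤ b₂)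
    (hba : b₂ ≤ a₂) (h₁ : 1 ≤ γ₁) (h₂ : 1 ≤ γ₂) (hη : -1 ≤ η) :
    productExpansion γ₁ γ₂ a₁ a₂ b₁ b₂
      ≤ (a₁ + b₁) ^ γ₁ * (a₂ + b₂) ^ γ₂ + interactionTerm γ₂ γ₁ η a₂ b₂ b₁ := by
  rw [← productExpansion_comm, mul_comm]
  exact productExpansion_le_of_le_left ha₁ hb₂ hb₁ hba h₂ h₁ hη

theorem mixed_term_le_interactionTerm (ha₁ : 0 ≤ a₁) (ha₂ : 0 ≤ a₂) (hab₁ : a₁ ≤ b₁)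
    (hab₂ : a₂ ≤ b₂) (h₁ : 1 ≤ γ₁) (h₂ : 1 ≤ γ₂) (hη : η ≤ γ₂ - 1) :
    a₁ ^ (γ₁ - 1) * a₂ ^ γ₂ * b₁ ≤ interactionTerm γ₂ γ₁ η a₂ b₂ b₁ := by
  have hb₁ : 0 ≤ b₁ := ha₁.trans hab₁
  have hb₂ : 0 ≤ b₂ := ha₂.trans hab₂
  have hsplit := rpow_add_le_mul_rpow ha₂ hab₂ (by linarith : 0 ≤ γ₂ - 1 - η) (q := 1 + η)
    (by ring_nf; linarith)
  rw [show γ₂ - 1 - η + (1 + η) = γ₂ by ring, mul_comm] at hsplit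
  calc a₁ ^ (γ₁ - 1) * a₂ ^ γ₂ * b₁ = a₂ ^ γ₂ * (a₁ ^ (γ₁ - 1) * b₁) := by ring
    _ ≤ a₂ ^ (1 + η) * b₂ ^ (γ₂ - 1 - η) * b₁ ^ γ₁ :=
        mul_le_mul hsplit (rpow_sub_one_mul_le_rpow ha₁ hab₁ h₁) (by positivity) (by positivity)

theorem productExpansion_le_of_le_of_le (ha₁ : 0 ≤ a₁) (ha₂ : 0 ≤ a₂) (hab₁ : a₁ ≤ b₁)
    (hab₂ : a₂ ≤ b₂) (h₁ : 1 ≤ γ₁) (h₂ : 1 ≤ γ₂) (hη₁ : η ≤ γ₁ - 1) (hη₂ : η ≤ γ₂ - 1) :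
    productExpansion γ₁ γ₂ a₁ a₂ b₁ b₂
      ≤ (a₁ + b₁) ^ γ₁ * (a₂ + b₂) ^ γ₂ + γ₂ * interactionTerm γ₁ γ₂ η a₁ b₁ b₂
        + γ₁ * interactionTerm γ₂ γ₁ η a₂ b₂ b₁ := by
  have hb₁ : 0 ≤ b₁ := ha₁.trans hab₁
  have hb₂ : 0 ≤ b₂ := ha₂.trans hab₂
  have hsuper := mul_le_mul (add_rpow_le_rpow_add ha₁ hb₁ h₁)
    (add_rpow_le_rpow_add ha₂ hb₂ h₂) (by positivity) (by positivity)
  have hmixed : 0 ≤ a₁ ^ γ₁ * b₂ ^ γ₂ + b₁ ^ γ₁ * a₂ ^ γ₂ := by positivity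
  have hterm₁ := mul_le_mul_of_nonneg_left
    (mixed_term_le_interactionTerm ha₁ ha₂ hab₁ hab₂ h₁ h₂ hη₂) (by linarith : 0 ≤ γ₁)
  have hterm₂ := mul_le_mul_of_nonneg_left
    (mixed_term_le_interactionTerm ha₂ ha₁ hab₂ hab₁ h₂ h₁ hη₁) (by linarith : 0 ≤ γ₂)
  unfold productExpansion
  nlinarith

end

theorem four_variable_interaction_estimate (γ₁ γ₂ η : ℝ)
    (h₁ : 1 < γ₁) (h₂ : 1 < γ₂) (hη : 0 < η) (hη' : η < min γ₁ γ₂ - 1) :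
    ∃ C : ℝ, 0 < C ∧ ∀ a₁ a₂ b₁ b₂ : ℝ, 0 ≤ a₁ → 0 ≤ a₂ → 0 ≤ b₁ → 0 ≤ b₂ →
      a₁ ^ γ₁ * a₂ ^ γ₂ + γ₁ * a₁ ^ (γ₁ - 1) * a₂ ^ γ₂ * b₁
        + γ₂ * a₁ ^ γ₁ * a₂ ^ (γ₂ - 1) * b₂ + b₁ ^ γ₁ * b₂ ^ γ₂
        - C * (a₁ ^ (1 + η) * b₁ ^ (γ₁ - 1 - η) * b₂ ^ γ₂
                + a₂ ^ (1 + η) * b₂ ^ (γ₂ - 1 - η) * b₁ ^ γ₁)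
        ≤ (a₁ + b₁) ^ γ₁ * (a₂ + b₂) ^ γ₂ := by
  have hη₁ : η ≤ γ₁ - 1 := by linarith [min_le_left γ₁ γ₂]
  have hη₂ : η ≤ γ₂ - 1 := by linarith [min_le_right γ₁ γ₂]
  refine ⟨γ₁ + γ₂, by linarith, fun a₁ a₂ b₁ b₂ ha₁ ha₂ hb₁ hb₂ => ?_⟩
  change productExpansion γ₁ γ₂ a₁ a₂ b₁ b₂
    - (γ₁ + γ₂) * (interactionTerm γ₁ γ₂ η a₁ b₁ b₂ + interactionTerm γ₂ γ₁ η a₂ b₂ b₁) ≤ _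
  have hE₁ := interactionTerm_nonneg (γ₁ := γ₁) (γ₂ := γ₂) (η := η) ha₁ hb₁ hb₂
  have hE₂ := interactionTerm_nonneg (γ₁ := γ₂) (γ₂ := γ₁) (η := η) ha₂ hb₂ hb₁
  rcases le_total b₁ a₁ with hba₁ | hab₁
  · have := productExpansion_le_of_le_left ha₂ hb₁ hb₂ hba₁ h₁.le h₂.le (η := η) (by linarith)
    nlinarith
  rcases le_total b₂ a₂ with hba₂ | hab₂
  · have := productExpansion_le_of_le_right ha₁ hb₁ hb₂ hba₂ h₁.le h₂.le (η := η) (by linarith)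
    nlinarith
  · have := productExpansion_le_of_le_of_le ha₁ ha₂ hab₁ hab₂ h₁.le h₂.le hη₁ hη₂
    nlinarith
end

section
/- Let r₁, r₂ > 1 be reals. For all s, t ≥ 0, s^{r₁} t^{r₂} ≤ (1/(r₁+r₂)) · r₁^{r₁/(r₁+r₂)} · r₂^{r₂/(r₁+r₂)} · ( s^{r₁+r₂} + t^{r₁+r₂} ). -/
/-!
Set `a = r₁ / (r₁ + r₂)` and `b = r₂ / (r₁ + r₂)`, so that `a + b = 1`. Weighted AM–GM applied to
`s ^ (r₁ + r₂) / a` and `t ^ (r₁ + r₂) / b` gives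
`s ^ r₁ * t ^ r₂ ≤ a ^ a * b ^ b * (s ^ (r₁ + r₂) + t ^ (r₁ + r₂))`, and
`a ^ a * b ^ b = r₁ ^ a * r₂ ^ b / (r₁ + r₂)`.
-/

open Real

namespace Real

theorem rpow_mul_rpow_le_mul_add {a b x y : ℝ} (ha : 0 < a) (hb : 0 < b) (hab : a + b = 1)
    (hx : 0 ≤ x) (hy : 0 ≤ y) : x ^ a * y ^ b ≤ a ^ a * b ^ b * (x + y) := by
  have amgm : (x / a) ^ a * (y / b) ^ b ≤ a * (x / a) + b * (y / b) :=
    geom_mean_le_arith_mean2_weighted ha.le hb.le (div_nonneg hx ha.le) (div_nonneg hy hb.le) hab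
  calc x ^ a * y ^ b = a ^ a * b ^ b * ((x / a) ^ a * (y / b) ^ b) := by
        rw [div_rpow hx ha.le, div_rpow hy hb.le]
        field_simp
    _ ≤ a ^ a * b ^ b * (a * (x / a) + b * (y / b)) := by gcongr
    _ = a ^ a * b ^ b * (x + y) := by field_simp

theorem div_add_rpow_mul_div_add_rpow {p q : ℝ} (hp : 0 < p) (hq : 0 < q) :
    (p / (p + q)) ^ (p / (p + q)) * (q / (p + q)) ^ (q / (p + q))
      = 1 / (p + q) * p ^ (p / (p + q)) * q ^ (q / (p + q)) := by
  have hpq : 0 < p + q := add_pos hp hq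
  have hexp : p / (p + q) + q / (p + q) = 1 := by field_simp
  have hden : (p + q) ^ (p / (p + q)) * (p + q) ^ (q / (p + q)) = p + q := by
    rw [← rpow_add hpq, hexp, rpow_one]
  rw [div_rpow hp.le hpq.le, div_rpow hq.le hpq.le, div_mul_div_comm, hden]
  ring

theorem rpow_mul_rpow_le_add_rpow {p q s t : ℝ} (hp : 0 < p) (hq : 0 < q) (hs : 0 ≤ s)
    (ht : 0 ≤ t) :
    s ^ p * t ^ q ≤ 1 / (p + q) * p ^ (p / (p + q)) * q ^ (q / (p + q))
      * (s ^ (p + q) + t ^ (p + q)) := by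
  have hpq : 0 < p + q := add_pos hp hq
  have hs' : s ^ p = (s ^ (p + q)) ^ (p / (p + q)) := by
    rw [← rpow_mul hs, mul_div_cancel₀ _ hpq.ne']
  have ht' : t ^ q = (t ^ (p + q)) ^ (q / (p + q)) := by
    rw [← rpow_mul ht, mul_div_cancel₀ _ hpq.ne']
  rw [hs', ht', ← div_add_rpow_mul_div_add_rpow hp hq]
  exact rpow_mul_rpow_le_mul_add (div_pos hp hpq) (div_pos hq hpq) (by field_simp)
    (rpow_nonneg hs _) (rpow_nonneg ht _)

end Real

theorem young_mixed_power_inequality (r₁ r₂ : ℝ) (hr₁ : 1 < r₁) (hr₂ : 1 < r₂) :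
    ∀ s t : ℝ, 0 ≤ s → 0 ≤ t →
      s ^ r₁ * t ^ r₂ ≤ (1 / (r₁ + r₂)) * r₁ ^ (r₁ / (r₁ + r₂)) * r₂ ^ (r₂ / (r₁ + r₂))
        * (s ^ (r₁ + r₂) + t ^ (r₁ + r₂)) :=
  fun _ _ hs ht => rpow_mul_rpow_le_add_rpow (by linarith) (by linarith) hs ht
end

section
/- Let u₁, u₂ : ℝᴺ → [0,∞) be measurable functions vanishing at infinity and let u₁*, u₂* denote their symmetric-decreasing rearrangements. Let G(s,t) be continuously differentiable on ℝ₊² with G(0,0)=0 such that ∂₁G(s,·) is nondecreasing for each fixed s ≥ 0 and ∂₂G(·,t) is nondecreasing for each fixed t ≥ 0, and ∂₁G, ∂₂G ≥ 0. Then ∫_{ℝᴺ} G(u₁*, u₂*) dx ≥ ∫_{ℝᴺ} G(u₁, u₂) dx. -/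
/-!
For `s, t ≥ 0` write `G s t = ∫₀ˢ G₁ σ t dσ + G 0 t`. By Tonelli and the layer-cake formula,
`∫ G(u₁, u₂) = ∫_{σ>0} ∫_{τ>0} |{σ < u₁} ∩ {τ < G₁(σ, u₂)}| dτ dσ + ∫_{τ>0} |{τ < G(0, u₂)}| dτ`.
Since `G₁ σ` and `G 0` are nondecreasing, each `{τ < G₁(σ, u₂)}` is the preimage under `u₂` of an
upper set of `ℝ`, hence has the same measure as the corresponding set for `u₂*`. For the
rearranged functions all these sets are centered balls (or the whole space), hence nested, and
`|A ∩ B| ≤ min |A| |B| = |A* ∩ B*|` compares the layers one by one.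
-/

open MeasureTheory Set Filter Topology Function
open scoped ENNReal

section Distribution

variable {α : Type*} [MeasurableSpace α] {μ : Measure α} {u v : α → ℝ}

theorem map_restrict_Ioi_zero_eq_of_measure_lt_eq (hu : Measurable u) (hv : Measurable v)
    (hfin : ∀ t : ℝ, 0 < t → μ {x | t < u x} < ⊤)
    (heq : ∀ t : ℝ, 0 < t → μ {x | t < v x} = μ {x | t < u x}) :
    (μ.map v).restrict (Ioi 0) = (μ.map u).restrict (Ioi 0) := by
  have hunion : Ioi (0 : ℝ) = ⋃ n : ℕ, Ioi (1 / ((n : ℝ) + 1)) := by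
    ext r
    simp only [mem_Ioi, mem_iUnion]
    exact ⟨exists_nat_one_div_lt, fun ⟨n, hn⟩ => lt_trans (by positivity) hn⟩
  rw [hunion, Measure.restrict_iUnion_congr]
  intro n
  set t : ℝ := 1 / ((n : ℝ) + 1)
  have ht : 0 < t := by positivity
  have hIoi : ∀ {w : α → ℝ}, Measurable w → ∀ a,
      (μ.map w).restrict (Ioi t) (Ioi a) = μ {x | max a t < w x} := fun hw a => by
    rw [Measure.restrict_apply measurableSet_Ioi, Ioi_inter_Ioi,
      Measure.map_apply hw measurableSet_Ioi]
    rfl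
  have : IsFiniteMeasure ((μ.map v).restrict (Ioi t)) := by
    rw [isFiniteMeasure_restrict, Measure.map_apply hv measurableSet_Ioi]
    exact ((heq t ht).trans_lt (hfin t ht)).ne
  refine ext_of_generate_finite _ (BorelSpace.measurable_eq.trans (borel_eq_generateFrom_Ioi ℝ))
    isPiSystem_Ioi ?_ ?_
  · rintro _ ⟨a, rfl⟩
    rw [hIoi hv, hIoi hu, heq _ (lt_max_of_lt_right ht)]
  · rw [Measure.restrict_apply_univ, Measure.restrict_apply_univ,
      Measure.map_apply hv measurableSet_Ioi, Measure.map_apply hu measurableSet_Ioi]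
    exact heq t ht

theorem measure_preimage_eq_of_isUpperSet (hu : Measurable u) (hv : Measurable v)
    (hu0 : ∀ x, 0 ≤ u x) (hv0 : ∀ x, 0 ≤ v x)
    (hfin : ∀ t : ℝ, 0 < t → μ {x | t < u x} < ⊤)
    (heq : ∀ t : ℝ, 0 < t → μ {x | t < v x} = μ {x | t < u x})
    {S : Set ℝ} (hS : IsUpperSet S) : μ (v ⁻¹' S) = μ (u ⁻¹' S) := by
  by_cases h0 : (0 : ℝ) ∈ S
  · have huniv : ∀ w : α → ℝ, (∀ x, 0 ≤ w x) → w ⁻¹' S = univ :=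
      fun w hw => eq_univ_of_forall fun x => hS (hw x) h0
    rw [huniv v hv0, huniv u hu0]
  · have hpos : S ⊆ Ioi 0 := fun s hs => lt_of_not_ge fun hs0 => h0 (hS hs0 hs)
    have hSm : MeasurableSet S := hS.ordConnected.measurableSet
    rw [← Measure.map_apply hv hSm, ← Measure.map_apply hu hSm, ← Measure.restrict_eq_self _ hpos,
      ← Measure.restrict_eq_self (μ.map u) hpos,
      map_restrict_Ioi_zero_eq_of_measure_lt_eq hu hv hfin heq]

theorem measure_inter_le_of_subset_or_subset {s t s' t' : Set α} (hs : μ s' = μ s)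
    (ht : μ t' = μ t) (h : s' ⊆ t' ∨ t' ⊆ s') : μ (s ∩ t) ≤ μ (s' ∩ t') := by
  rcases h with h | h
  · rw [inter_eq_self_of_subset_left h, hs]
    exact measure_mono inter_subset_left
  · rw [inter_eq_self_of_subset_right h, ht]
    exact measure_mono inter_subset_right

end Distribution

section NormLowerSet

variable {E : Type*} [NormedAddCommGroup E]

/-- The centered balls, open or closed, and the whole space. -/
def IsNormLowerSet (s : Set E) : Prop :=
  ∀ ⦃x⦄, x ∈ s → ∀ ⦃y : E⦄, ‖y‖ ≤ ‖x‖ → y ∈ s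

theorem isNormLowerSet_univ : IsNormLowerSet (univ : Set E) := fun _ _ _ _ => trivial

theorem isNormLowerSet_ball (r : ℝ) : IsNormLowerSet (Metric.ball (0 : E) r) :=
  fun _ hx _ hxy => mem_ball_zero_iff.2 (hxy.trans_lt (mem_ball_zero_iff.1 hx))

theorem IsNormLowerSet.subset_or_subset {s t : Set E} (hs : IsNormLowerSet s)
    (ht : IsNormLowerSet t) : s ⊆ t ∨ t ⊆ s := by
  by_contra! h
  obtain ⟨⟨x, hxs, hxt⟩, ⟨y, hyt, hys⟩⟩ := And.intro (not_subset.1 h.1) (not_subset.1 h.2)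
  rcases le_total ‖x‖ ‖y‖ with hxy | hyx
  · exact hxt (ht hyt hxy)
  · exact hys (hs hxs hyx)

variable {u : E → ℝ}

theorem le_of_norm_le_of_superlevel_ball (hu0 : ∀ x, 0 ≤ u x)
    (hball : ∀ t : ℝ, 0 < t → ∃ r : ℝ, {x | t < u x} = Metric.ball (0 : E) r)
    {x y : E} (hxy : ‖y‖ ≤ ‖x‖) : u x ≤ u y := by
  by_contra! h
  obtain ⟨r, hr⟩ := hball ((u y + u x) / 2) (by linarith [hu0 y])
  have hx : x ∈ {z | (u y + u x) / 2 < u z} := show _ < u x by linarith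
  rw [hr] at hx
  have hy : y ∈ {z | (u y + u x) / 2 < u z} := hr ▸ isNormLowerSet_ball r hx hxy
  exact (show (u y + u x) / 2 < u y from hy).not_ge (by linarith)

theorem isNormLowerSet_preimage_of_superlevel_ball (hu0 : ∀ x, 0 ≤ u x)
    (hball : ∀ t : ℝ, 0 < t → ∃ r : ℝ, {x | t < u x} = Metric.ball (0 : E) r)
    {S : Set ℝ} (hS : IsUpperSet S) : IsNormLowerSet (u ⁻¹' S) :=
  fun _ hx _ hxy => hS (le_of_norm_le_of_superlevel_ball hu0 hball hxy) hx

theorem setLIntegral_comp_le_of_superlevel_ball [MeasurableSpace E] {μ : Measure E}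
    {us : E → ℝ} (hu : Measurable u) (hus : Measurable us)
    (hu0 : ∀ x, 0 ≤ u x) (hus0 : ∀ x, 0 ≤ us x)
    (hfin : ∀ t : ℝ, 0 < t → μ {x | t < u x} < ⊤)
    (heq : ∀ t : ℝ, 0 < t → μ {x | t < us x} = μ {x | t < u x})
    (hball : ∀ t : ℝ, 0 < t → ∃ r : ℝ, {x | t < us x} = Metric.ball (0 : E) r)
    {s s' : Set E} (hs : MeasurableSet s) (hs' : MeasurableSet s') (hμs : μ s' = μ s)
    (hs'N : IsNormLowerSet s') {φ : ℝ → ℝ} (hφ : Monotone φ) (hφ0 : 0 ≤ φ 0) :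
    ∫⁻ x in s, ENNReal.ofReal (φ (u x)) ∂μ ≤ ∫⁻ x in s', ENNReal.ofReal (φ (us x)) ∂μ := by
  have hlevel : ∀ τ : ℝ, IsUpperSet {r | τ < φ r} := fun τ _ _ hab h => h.trans_le (hφ hab)
  have hlayer : ∀ {w : E → ℝ} {t : Set E}, Measurable w → (∀ x, 0 ≤ w x) → MeasurableSet t →
      ∫⁻ x in t, ENNReal.ofReal (φ (w x)) ∂μ =
        ∫⁻ τ in Ioi 0, μ (w ⁻¹' {r | τ < φ r} ∩ t) := fun hw hw0 ht => by
    rw [lintegral_eq_lintegral_meas_lt _ (ae_of_all _ fun x => hφ0.trans (hφ (hw0 x)))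
      (hφ.measurable.comp hw).aemeasurable]
    exact lintegral_congr fun τ =>
      Measure.restrict_apply ((hlevel τ).ordConnected.measurableSet.preimage hw)
  rw [hlayer hu hu0 hs, hlayer hus hus0 hs']
  exact lintegral_mono fun τ => measure_inter_le_of_subset_or_subset
    (measure_preimage_eq_of_isUpperSet hu hus hu0 hus0 hfin heq (hlevel τ)) hμs
    ((isNormLowerSet_preimage_of_superlevel_ball hus0 hball (hlevel τ)).subset_or_subset hs'N)

end NormLowerSet

section Calculus

theorem MonotoneOn.monotone_comp_max {f : ℝ → ℝ} {a : ℝ} (hf : MonotoneOn f (Ici a)) :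
    Monotone fun x => f (max x a) :=
  fun x y hxy => hf (le_max_right x a) (le_max_right y a) (max_le_max_right a hxy)

theorem monotoneOn_Ici_of_hasDerivAt_nonneg {f f' : ℝ → ℝ} {a : ℝ}
    (hf : ∀ x, a ≤ x → HasDerivAt f (f' x) x) (hf' : ∀ x, a ≤ x → 0 ≤ f' x) :
    MonotoneOn f (Ici a) :=
  monotoneOn_of_hasDerivWithinAt_nonneg (convex_Ici a)
    (fun x hx => (hf x hx).continuousAt.continuousWithinAt)
    (fun x hx => (hf x (interior_subset hx)).hasDerivWithinAt)
    (fun x hx => hf' x (interior_subset hx))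

theorem ofReal_sub_eq_setLIntegral_Ioo {f f' : ℝ → ℝ} {a b : ℝ} (hab : a ≤ b)
    (hf : ∀ x ∈ Icc a b, HasDerivAt f (f' x) x) (hf' : ∀ x ∈ Ioo a b, 0 ≤ f' x) :
    ENNReal.ofReal (f b - f a) = ∫⁻ x in Ioo a b, ENNReal.ofReal (f' x) := by
  have hcont : ContinuousOn f (uIcc a b) := fun x hx =>
    (hf x (uIcc_of_le hab ▸ hx)).continuousAt.continuousWithinAt
  have hderiv : ∀ x ∈ Ioo (min a b) (max a b), HasDerivAt f (f' x) x := fun x hx =>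
    hf x (Ioo_subset_Icc_self (by rwa [min_eq_left hab, max_eq_right hab] at hx))
  have hint : IntervalIntegrable f' volume a b :=
    intervalIntegral.intervalIntegrable_deriv_of_nonneg hcont hderiv
      (by rwa [min_eq_left hab, max_eq_right hab])
  rw [← intervalIntegral.integral_eq_sub_of_hasDerivAt (fun x hx => hf x (uIcc_of_le hab ▸ hx))
      hint, intervalIntegral.integral_of_le hab, integral_Ioc_eq_integral_Ioo]
  exact ofReal_integral_eq_lintegral_ofReal
    ((intervalIntegrable_iff_integrableOn_Ioo_of_le hab).1 hint)
    (ae_restrict_of_forall_mem measurableSet_Ioo hf')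

theorem measurable_comp_max_of_continuousAt {F : ℝ → ℝ → ℝ}
    (h₁ : ∀ s t : ℝ, 0 ≤ s → 0 ≤ t → ContinuousAt (fun z => F z t) s)
    (h₂ : ∀ s t : ℝ, 0 ≤ s → 0 ≤ t → ContinuousAt (fun z => F s z) t) :
    Measurable fun p : ℝ × ℝ => F (max p.1 0) (max p.2 0) := by
  have hmax : Continuous fun x : ℝ => max x 0 := continuous_id.max continuous_const
  refine measurable_uncurry_of_continuous_of_measurable (u := fun s t => F (max s 0) (max t 0))
    (fun t => continuous_iff_continuousAt.2 fun s => ?_)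
    (fun s => (continuous_iff_continuousAt.2 fun t => ?_).measurable)
  · exact (h₁ _ _ (le_max_right s 0) (le_max_right t 0)).comp (f := fun x => max x 0)
      hmax.continuousAt
  · exact (h₂ _ _ (le_max_right s 0) (le_max_right t 0)).comp (f := fun x => max x 0)
      hmax.continuousAt

theorem measurable_comp_max_of_hasDerivAt {β : Type*} [MeasurableSpace β] {F F' : ℝ → β → ℝ}
    (hF : Measurable fun p : ℝ × β => F (max p.1 0) p.2)
    (hF' : ∀ s t, 0 ≤ s → HasDerivAt (fun z => F z t) (F' s t) s) :
    Measurable fun p : ℝ × β => F' (max p.1 0) p.2 := by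
  refine measurable_of_tendsto_metrizable
    (f := fun (n : ℕ) (p : ℝ × β) =>
      ((n : ℝ) + 1) * (F (max p.1 0 + 1 / ((n : ℝ) + 1)) p.2 - F (max p.1 0) p.2))
    (fun n => ?_) (tendsto_pi_nhds.2 fun p => ?_)
  · have hshift : Measurable fun p : ℝ × β => F (max p.1 0 + 1 / ((n : ℝ) + 1)) p.2 := by
      have hshift_arg : Measurable fun p : ℝ × β => (max p.1 0 + 1 / ((n : ℝ) + 1), p.2) := by
        fun_prop
      convert hF.comp hshift_arg using 2 with p
      rw [comp_apply, max_eq_left (add_nonneg (le_max_right _ _) Nat.one_div_pos_of_nat.le)]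
    exact (hshift.sub hF).const_mul _
  · have hseq : Tendsto (fun n : ℕ => 1 / ((n : ℝ) + 1)) atTop (𝓝[≠] 0) :=
      tendsto_nhdsWithin_iff.2 ⟨tendsto_one_div_add_atTop_nhds_zero_nat,
        Eventually.of_forall fun n => (Nat.one_div_pos_of_nat).ne'⟩
    refine ((hasDerivAt_iff_tendsto_slope_zero.1
      (hF' (max p.1 0) p.2 (le_max_right _ _))).comp hseq).congr fun n => ?_
    simp only [comp_apply, one_div, inv_inv, smul_eq_mul]

end Calculus

theorem lintegral_setLIntegral_Ioo_eq {α : Type*} [MeasurableSpace α] {μ : Measure α} [SFinite μ]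
    {v : α → ℝ} (hv : Measurable v) {F : α → ℝ → ℝ≥0∞} (hF : Measurable (uncurry F)) :
    ∫⁻ x, (∫⁻ σ in Ioo 0 (v x), F x σ) ∂μ = ∫⁻ σ in Ioi 0, ∫⁻ x in {x | σ < v x}, F x σ ∂μ := by
  set S : Set (α × ℝ) := {p | p.2 < v p.1}
  have hS : MeasurableSet S := measurableSet_lt measurable_snd (hv.comp measurable_fst)
  calc ∫⁻ x, (∫⁻ σ in Ioo 0 (v x), F x σ) ∂μ
      = ∫⁻ x, (∫⁻ σ in Ioi 0, S.indicator (uncurry F) (x, σ)) ∂μ := lintegral_congr fun x => by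
        rw [← Ioi_inter_Iio, inter_comm, ← Measure.restrict_restrict measurableSet_Iio,
          ← lintegral_indicator measurableSet_Iio]
        rfl
    _ = ∫⁻ σ in Ioi 0, ∫⁻ x, S.indicator (uncurry F) (x, σ) ∂μ :=
        lintegral_lintegral_swap (hF.indicator hS).aemeasurable
    _ = ∫⁻ σ in Ioi 0, ∫⁻ x in {x | σ < v x}, F x σ ∂μ := lintegral_congr fun σ => by
        rw [← lintegral_indicator (measurableSet_lt measurable_const hv)]
        rfl

section Integrand

variable {G G₁ G₂ : ℝ → ℝ → ℝ}

theorem monotone_apply_zero_comp_max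
    (hd₂ : ∀ s t : ℝ, 0 ≤ s → 0 ≤ t → HasDerivAt (fun z => G s z) (G₂ s t) t)
    (hG₂nonneg : ∀ s t : ℝ, 0 ≤ s → 0 ≤ t → 0 ≤ G₂ s t) :
    Monotone fun t => G 0 (max t 0) :=
  (monotoneOn_Ici_of_hasDerivAt_nonneg (fun t ht => hd₂ 0 t le_rfl ht)
    (fun t ht => hG₂nonneg 0 t le_rfl ht)).monotone_comp_max

theorem nonneg_of_hasDerivAt_nonneg (hG0 : G 0 0 = 0)
    (hd₁ : ∀ s t : ℝ, 0 ≤ s → 0 ≤ t → HasDerivAt (fun z => G z t) (G₁ s t) s)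
    (hd₂ : ∀ s t : ℝ, 0 ≤ s → 0 ≤ t → HasDerivAt (fun z => G s z) (G₂ s t) t)
    (hG₁nonneg : ∀ s t : ℝ, 0 ≤ s → 0 ≤ t → 0 ≤ G₁ s t)
    (hG₂nonneg : ∀ s t : ℝ, 0 ≤ s → 0 ≤ t → 0 ≤ G₂ s t) {s t : ℝ} (hs : 0 ≤ s) (ht : 0 ≤ t) :
    0 ≤ G s t :=
  calc 0 = G 0 0 := hG0.symm
    _ ≤ G 0 t := monotoneOn_Ici_of_hasDerivAt_nonneg (fun t ht => hd₂ 0 t le_rfl ht)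
        (fun t ht => hG₂nonneg 0 t le_rfl ht) self_mem_Ici ht ht
    _ ≤ G s t := monotoneOn_Ici_of_hasDerivAt_nonneg (fun s hs => hd₁ s t hs ht)
        (fun s hs => hG₁nonneg s t hs ht) self_mem_Ici hs hs

theorem ofReal_eq_setLIntegral_Ioo_add
    (hd₁ : ∀ s t : ℝ, 0 ≤ s → 0 ≤ t → HasDerivAt (fun z => G z t) (G₁ s t) s)
    (hG₁nonneg : ∀ s t : ℝ, 0 ≤ s → 0 ≤ t → 0 ≤ G₁ s t) {s t : ℝ} (hs : 0 ≤ s) (ht : 0 ≤ t)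
    (h0t : 0 ≤ G 0 t) :
    ENNReal.ofReal (G s t) =
      (∫⁻ σ in Ioo 0 s, ENNReal.ofReal (G₁ (max σ 0) (max t 0)))
        + ENNReal.ofReal (G 0 (max t 0)) := by
  have hmono := monotoneOn_Ici_of_hasDerivAt_nonneg (fun σ hσ => hd₁ σ t hσ ht)
    (fun σ hσ => hG₁nonneg σ t hσ ht)
  rw [max_eq_left ht, ← sub_add_cancel (G s t) (G 0 t),
    ENNReal.ofReal_add (sub_nonneg.2 (hmono self_mem_Ici hs hs)) h0t,
    ofReal_sub_eq_setLIntegral_Ioo hs (fun σ hσ => hd₁ σ t hσ.1 ht)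
      (fun σ hσ => hG₁nonneg σ t hσ.1.le ht)]
  congr 1
  exact setLIntegral_congr_fun measurableSet_Ioo fun σ hσ => by rw [max_eq_left hσ.1.le]

/-- `G` and `G₁` are only controlled on the closed quadrant; precomposing with `max · 0` makes
them measurable on all of `ℝ²`. -/
theorem lintegral_ofReal_eq_lintegral_superlevel_add {α : Type*} [MeasurableSpace α]
    {μ : Measure α} [SFinite μ] (hG0 : G 0 0 = 0)
    (hd₁ : ∀ s t : ℝ, 0 ≤ s → 0 ≤ t → HasDerivAt (fun z => G z t) (G₁ s t) s)
    (hd₂ : ∀ s t : ℝ, 0 ≤ s → 0 ≤ t → HasDerivAt (fun z => G s z) (G₂ s t) t)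
    (hG₁nonneg : ∀ s t : ℝ, 0 ≤ s → 0 ≤ t → 0 ≤ G₁ s t)
    (hG₂nonneg : ∀ s t : ℝ, 0 ≤ s → 0 ≤ t → 0 ≤ G₂ s t)
    {v w : α → ℝ} (hv : Measurable v) (hw : Measurable w) (hv0 : ∀ x, 0 ≤ v x)
    (hw0 : ∀ x, 0 ≤ w x) :
    ∫⁻ x, ENNReal.ofReal (G (v x) (w x)) ∂μ =
      (∫⁻ σ in Ioi 0, ∫⁻ x in {x | σ < v x}, ENNReal.ofReal (G₁ (max σ 0) (max (w x) 0)) ∂μ)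
        + ∫⁻ x, ENNReal.ofReal (G 0 (max (w x) 0)) ∂μ := by
  have hGm : Measurable fun p : ℝ × ℝ => G (max p.1 0) (max p.2 0) :=
    measurable_comp_max_of_continuousAt (fun s t hs ht => (hd₁ s t hs ht).continuousAt)
      (fun s t hs ht => (hd₂ s t hs ht).continuousAt)
  have hG₁m : Measurable fun p : ℝ × ℝ => G₁ (max p.1 0) (max p.2 0) :=
    measurable_comp_max_of_hasDerivAt (F := fun s t => G s (max t 0)) hGm
      (fun s t hs => hd₁ s (max t 0) hs (le_max_right t 0))
  have hG0w : Measurable fun x => ENNReal.ofReal (G 0 (max (w x) 0)) :=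
    ((monotone_apply_zero_comp_max hd₂ hG₂nonneg).measurable.comp hw).ennreal_ofReal
  rw [lintegral_congr fun x => ofReal_eq_setLIntegral_Ioo_add hd₁ hG₁nonneg (hv0 x) (hw0 x)
      (nonneg_of_hasDerivAt_nonneg hG0 hd₁ hd₂ hG₁nonneg hG₂nonneg le_rfl (hw0 x)),
    lintegral_add_right _ hG0w,
    lintegral_setLIntegral_Ioo_eq (F := fun x σ => ENNReal.ofReal (G₁ (max σ 0) (max (w x) 0))) hv
      (hG₁m.comp (measurable_snd.prodMk (hw.comp measurable_fst))).ennreal_ofReal]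

end Integrand

theorem rearrangement_increases_G_integral_general (N : ℕ)
    (u₁ u₂ u₁s u₂s : EuclideanSpace ℝ (Fin N) → ℝ)
    (hu₁m : Measurable u₁) (hu₂m : Measurable u₂)
    (hu₁sm : Measurable u₁s) (hu₂sm : Measurable u₂s)
    (hu₁ : ∀ x, 0 ≤ u₁ x) (hu₂ : ∀ x, 0 ≤ u₂ x)
    (hu₁s : ∀ x, 0 ≤ u₁s x) (hu₂s : ∀ x, 0 ≤ u₂s x)
    (hvan₂ : ∀ t : ℝ, 0 < t → volume {x | t < u₂ x} < ⊤)
    (heq₁ : ∀ t : ℝ, 0 < t → volume {x | t < u₁s x} = volume {x | t < u₁ x})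
    (heq₂ : ∀ t : ℝ, 0 < t → volume {x | t < u₂s x} = volume {x | t < u₂ x})
    (hball₁ : ∀ t : ℝ, 0 < t →
      ∃ r : ℝ, {x | t < u₁s x} = Metric.ball (0 : EuclideanSpace ℝ (Fin N)) r)
    (hball₂ : ∀ t : ℝ, 0 < t →
      ∃ r : ℝ, {x | t < u₂s x} = Metric.ball (0 : EuclideanSpace ℝ (Fin N)) r)
    (G G₁ G₂ : ℝ → ℝ → ℝ)
    (hG0 : G 0 0 = 0)
    (hd₁ : ∀ s t : ℝ, 0 ≤ s → 0 ≤ t → HasDerivAt (fun z => G z t) (G₁ s t) s)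
    (hd₂ : ∀ s t : ℝ, 0 ≤ s → 0 ≤ t → HasDerivAt (fun z => G s z) (G₂ s t) t)
    (hG₁nonneg : ∀ s t : ℝ, 0 ≤ s → 0 ≤ t → 0 ≤ G₁ s t)
    (hG₂nonneg : ∀ s t : ℝ, 0 ≤ s → 0 ≤ t → 0 ≤ G₂ s t)
    (hG₁mono : ∀ s t t' : ℝ, 0 ≤ s → 0 ≤ t → t ≤ t' → G₁ s t ≤ G₁ s t')
    (hints : Integrable (fun x => G (u₁s x) (u₂s x))) :
    (∫ x, G (u₁ x) (u₂ x)) ≤ ∫ x, G (u₁s x) (u₂s x) := by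
  have hGnonneg : ∀ s t : ℝ, 0 ≤ s → 0 ≤ t → 0 ≤ G s t := fun s t =>
    nonneg_of_hasDerivAt_nonneg hG0 hd₁ hd₂ hG₁nonneg hG₂nonneg
  have hRHS : 0 ≤ ∫ x, G (u₁s x) (u₂s x) :=
    integral_nonneg fun x => hGnonneg _ _ (hu₁s x) (hu₂s x)
  by_cases hint : Integrable fun x => G (u₁ x) (u₂ x)
  swap
  · exact (integral_undef hint).trans_le hRHS
  have hlayers := @lintegral_ofReal_eq_lintegral_superlevel_add G G₁ G₂ _ _
    (volume : Measure (EuclideanSpace ℝ (Fin N))) _ hG0 hd₁ hd₂ hG₁nonneg hG₂nonneg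
  rw [← ENNReal.ofReal_le_ofReal_iff hRHS,
    ofReal_integral_eq_lintegral_ofReal hint (ae_of_all _ fun x => hGnonneg _ _ (hu₁ x) (hu₂ x)),
    ofReal_integral_eq_lintegral_ofReal hints
      (ae_of_all _ fun x => hGnonneg _ _ (hu₁s x) (hu₂s x)),
    hlayers hu₁m hu₂m hu₁ hu₂, hlayers hu₁sm hu₂sm hu₁s hu₂s]
  gcongr ?_ + ?_
  · refine setLIntegral_mono' measurableSet_Ioi fun σ hσ => ?_
    obtain ⟨r, hr⟩ := hball₁ σ hσ
    exact setLIntegral_comp_le_of_superlevel_ball hu₂m hu₂sm hu₂ hu₂s hvan₂ heq₂ hball₂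
      (measurableSet_lt measurable_const hu₁m) (measurableSet_lt measurable_const hu₁sm)
      (heq₁ σ hσ) (hr ▸ isNormLowerSet_ball r)
      (MonotoneOn.monotone_comp_max fun t ht t' _ htt' =>
        hG₁mono _ t t' (le_max_right σ 0) ht htt')
      (hG₁nonneg _ _ (le_max_right σ 0) (le_max_right 0 0))
  · simpa only [Measure.restrict_univ] using setLIntegral_comp_le_of_superlevel_ball hu₂m hu₂sm
      hu₂ hu₂s hvan₂ heq₂ hball₂ MeasurableSet.univ MeasurableSet.univ rfl isNormLowerSet_univ
      (monotone_apply_zero_comp_max hd₂ hG₂nonneg) (hGnonneg 0 _ le_rfl (le_max_right 0 0))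

theorem rearrangement_increases_G_integral (N : ℕ) (hN : 1 ≤ N)
    (u₁ u₂ u₁s u₂s : EuclideanSpace ℝ (Fin N) → ℝ)
    (hu₁m : Measurable u₁) (hu₂m : Measurable u₂)
    (hu₁sm : Measurable u₁s) (hu₂sm : Measurable u₂s)
    (hu₁ : ∀ x, 0 ≤ u₁ x) (hu₂ : ∀ x, 0 ≤ u₂ x)
    (hu₁s : ∀ x, 0 ≤ u₁s x) (hu₂s : ∀ x, 0 ≤ u₂s x)
    (hvan₁ : ∀ t : ℝ, 0 < t → volume {x | t < u₁ x} < ⊤)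
    (hvan₂ : ∀ t : ℝ, 0 < t → volume {x | t < u₂ x} < ⊤)
    (heq₁ : ∀ t : ℝ, 0 < t → volume {x | t < u₁s x} = volume {x | t < u₁ x})
    (heq₂ : ∀ t : ℝ, 0 < t → volume {x | t < u₂s x} = volume {x | t < u₂ x})
    (hball₁ : ∀ t : ℝ, 0 < t →
      ∃ r : ℝ, {x | t < u₁s x} = Metric.ball (0 : EuclideanSpace ℝ (Fin N)) r)
    (hball₂ : ∀ t : ℝ, 0 < t →
      ∃ r : ℝ, {x | t < u₂s x} = Metric.ball (0 : EuclideanSpace ℝ (Fin N)) r)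
    (G G₁ G₂ : ℝ → ℝ → ℝ)
    (hG0 : G 0 0 = 0)
    (hd₁ : ∀ s t : ℝ, 0 ≤ s → 0 ≤ t → HasDerivAt (fun z => G z t) (G₁ s t) s)
    (hd₂ : ∀ s t : ℝ, 0 ≤ s → 0 ≤ t → HasDerivAt (fun z => G s z) (G₂ s t) t)
    (hG₁nonneg : ∀ s t : ℝ, 0 ≤ s → 0 ≤ t → 0 ≤ G₁ s t)
    (hG₂nonneg : ∀ s t : ℝ, 0 ≤ s → 0 ≤ t → 0 ≤ G₂ s t)
    (hG₁mono : ∀ s t t' : ℝ, 0 ≤ s → 0 ≤ t → t ≤ t' → G₁ s t ≤ G₁ s t')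
    (hG₂mono : ∀ s s' t : ℝ, 0 ≤ s → s ≤ s' → 0 ≤ t → G₂ s t ≤ G₂ s' t)
    (hint : Integrable (fun x => G (u₁ x) (u₂ x)))
    (hints : Integrable (fun x => G (u₁s x) (u₂s x))) :
    (∫ x, G (u₁ x) (u₂ x)) ≤ ∫ x, G (u₁s x) (u₂s x) :=
  rearrangement_increases_G_integral_general N u₁ u₂ u₁s u₂s hu₁m hu₂m hu₁sm hu₂sm hu₁ hu₂ hu₁s hu₂s
    hvan₂ heq₁ heq₂ hball₁ hball₂ G G₁ G₂ hG0 hd₁ hd₂ hG₁nonneg hG₂nonneg hG₁mono hints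
end
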